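/- arXiv:2206.08996 — 2 statements merged into one kernel-verified Lean document; each statement's English description precedes it below -/
import Mathlib

section
/- Fix innate opinions s ∈ ℝⁿ. Let K_n be the complete graph on n vertices with all edge weights equal to w̄, whose Laplacian is L_{K_n} = w̄·(n·I − 1·1ᵀ), and let z_{K_n} = (I + L_{K_n})^{-1}·s. Then for every weighted undirected graph G on n vertices with maximal edge weight w̄ and expressed opinions z_G = (I + L_G)^{-1}·s, we have P(z_{K_n}) ≤ P(z_G); moreover P(z_{K_n}) = P(s)/(1 + w̄·n)². -/
open Matrix Finset

noncomputable def deg {n : ℕ} (W : Matrix (Fin n) (Fin n) ℝ) (i : Fin n) : ℝ := ∑ j, W i j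

noncomputable def lap {n : ℕ} (W : Matrix (Fin n) (Fin n) ℝ) : Matrix (Fin n) (Fin n) ℝ :=
  Matrix.diagonal (deg W) - W

noncomputable def mean {n : ℕ} (x : Fin n → ℝ) : ℝ := (∑ i, x i) / n

noncomputable def ctr {n : ℕ} (x : Fin n → ℝ) : Fin n → ℝ := fun i => x i - mean x

noncomputable def pol {n : ℕ} (x : Fin n → ℝ) : ℝ := ∑ i, (x i - mean x) ^ 2

def vij {n : ℕ} (i j : Fin n) : Fin n → ℝ :=
  fun k => (if k = i then (1 : ℝ) else 0) - (if k = j then (1 : ℝ) else 0)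

/-!
Centering commutes with the Friedkin–Johnsen equation `(I + L) z = s`, so the centered innate
opinions are `(I + L)` applied to the centered expressed opinions. A Laplacian with weights at most
`w̄` is dominated, as a quadratic form, by the complete-graph Laplacian `w̄ (n I - 𝟙𝟙ᵀ) ≤ w̄ n I`;
hence `0 ≤ L ≤ w̄ n I`, so `‖(I + L) y‖ ≤ (1 + w̄ n) ‖y‖` and `P(s) ≤ (1 + w̄ n)² P(z_G)`.
On centered vectors the complete-graph Laplacian acts as `w̄ n I`, which gives equality for `K_n`.
-/
section QuadraticForm

variable {ι : Type*} [Fintype ι]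

lemma Matrix.IsSymm.dotProduct_mulVec_comm {A : Matrix ι ι ℝ} (hA : A.IsSymm) (x y : ι → ℝ) :
    x ⬝ᵥ A *ᵥ y = y ⬝ᵥ A *ᵥ x := by
  rw [← dotProduct_transpose_mulVec, hA.eq]

open scoped MatrixOrder in
lemma Matrix.PosSemidef.mulVec_dotProduct_mulVec_le {L : Matrix ι ι ℝ} (hL : L.PosSemidef)
    {c : ℝ} (hLc : ∀ x, x ⬝ᵥ L *ᵥ x ≤ c * (x ⬝ᵥ x)) (y : ι → ℝ) :
    (L *ᵥ y) ⬝ᵥ (L *ᵥ y) ≤ c * (y ⬝ᵥ L *ᵥ y) := by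
  classical
  set R := CFC.sqrt L
  have hRR : R * R = L := CFC.sqrt_mul_sqrt_self L hL.nonneg
  have hR : R.IsSymm :=
    isHermitian_iff_isSymm.mp (CFC.sqrt_nonneg L).posSemidef.isHermitian
  -- with `R = √L`, the claim is `hLc` at the vector `R y`
  calc (L *ᵥ y) ⬝ᵥ (L *ᵥ y) = (R *ᵥ y) ⬝ᵥ L *ᵥ (R *ᵥ y) := by
        simp only [← hRR, ← mulVec_mulVec]
        rw [dotProduct_comm, hR.dotProduct_mulVec_comm]
    _ ≤ c * ((R *ᵥ y) ⬝ᵥ (R *ᵥ y)) := hLc _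
    _ = c * (y ⬝ᵥ L *ᵥ y) := by
        rw [← hRR, ← mulVec_mulVec, hR.dotProduct_mulVec_comm]

lemma Matrix.PosSemidef.add_mulVec_dotProduct_le {L : Matrix ι ι ℝ} (hL : L.PosSemidef)
    {c : ℝ} (hc : 0 ≤ c) (hLc : ∀ x, x ⬝ᵥ L *ᵥ x ≤ c * (x ⬝ᵥ x)) (y : ι → ℝ) :
    (y + L *ᵥ y) ⬝ᵥ (y + L *ᵥ y) ≤ (1 + c) ^ 2 * (y ⬝ᵥ y) := by
  have hq := hL.dotProduct_mulVec_nonneg y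
  simp only [star_trivial] at hq
  have hsq := hL.mulVec_dotProduct_mulVec_le hLc y
  have hyy := hLc y
  have hexp : (y + L *ᵥ y) ⬝ᵥ (y + L *ᵥ y)
      = y ⬝ᵥ y + 2 * (y ⬝ᵥ L *ᵥ y) + (L *ᵥ y) ⬝ᵥ (L *ᵥ y) := by
    simp only [add_dotProduct, dotProduct_add, dotProduct_comm (L *ᵥ y) y]
    ring
  rw [hexp]
  linarith [mul_le_mul_of_nonneg_left hyy (by linarith : (0:ℝ) ≤ 2 + c)]

end QuadraticForm

section Laplacian

variable {n : ℕ}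

lemma lap_mulVec_apply (W : Matrix (Fin n) (Fin n) ℝ) (x : Fin n → ℝ) (i : Fin n) :
    (lap W *ᵥ x) i = ∑ j, W i j * (x i - x j) := by
  rw [lap, sub_mulVec, Pi.sub_apply, mulVec_diagonal, deg, Finset.sum_mul, mulVec, dotProduct,
    ← Finset.sum_sub_distrib]
  simp only [mul_sub]

lemma lap_mulVec_ctr (W : Matrix (Fin n) (Fin n) ℝ) (x : Fin n → ℝ) :
    lap W *ᵥ ctr x = lap W *ᵥ x := by
  ext i
  simp only [lap_mulVec_apply, ctr, sub_sub_sub_cancel_right]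

lemma lap_isSymm {W : Matrix (Fin n) (Fin n) ℝ} (hW : W.IsSymm) : (lap W).IsSymm := by
  simp only [lap, IsSymm, transpose_sub, diagonal_transpose, hW.eq]

lemma sum_lap_mulVec {W : Matrix (Fin n) (Fin n) ℝ} (hW : W.IsSymm) (x : Fin n → ℝ) :
    ∑ i, (lap W *ᵥ x) i = 0 := by
  have hconst : lap W *ᵥ 1 = 0 := by
    ext i
    simp [lap_mulVec_apply]
  rw [← one_dotProduct, (lap_isSymm hW).dotProduct_mulVec_comm, hconst, dotProduct_zero]

lemma two_mul_dotProduct_lap_mulVec {W : Matrix (Fin n) (Fin n) ℝ} (hW : W.IsSymm)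
    (x : Fin n → ℝ) :
    2 * (x ⬝ᵥ lap W *ᵥ x) = ∑ i, ∑ j, W i j * (x i - x j) ^ 2 := by
  have hswap : ∑ i, ∑ j, W i j * (x i * (x i - x j))
      = ∑ i, ∑ j, W i j * (x j * (x j - x i)) := by
    rw [Finset.sum_comm]
    simp only [hW.apply]
  have hform : x ⬝ᵥ lap W *ᵥ x = ∑ i, ∑ j, W i j * (x i * (x i - x j)) := by
    simp only [dotProduct, lap_mulVec_apply, Finset.mul_sum]
    exact Finset.sum_congr rfl fun i _ => Finset.sum_congr rfl fun j _ => by ring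
  rw [two_mul, hform]
  nth_rw 2 [hswap]
  rw [← Finset.sum_add_distrib]
  refine Finset.sum_congr rfl fun i _ => ?_
  rw [← Finset.sum_add_distrib]
  exact Finset.sum_congr rfl fun j _ => by ring

lemma dotProduct_lap_mulVec_nonneg {W : Matrix (Fin n) (Fin n) ℝ} (hW : W.IsSymm)
    (hW0 : ∀ i j, 0 ≤ W i j) (x : Fin n → ℝ) : 0 ≤ x ⬝ᵥ lap W *ᵥ x := by
  have h := two_mul_dotProduct_lap_mulVec hW x
  have : 0 ≤ ∑ i, ∑ j, W i j * (x i - x j) ^ 2 :=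
    Finset.sum_nonneg fun i _ => Finset.sum_nonneg fun j _ => mul_nonneg (hW0 i j) (sq_nonneg _)
  linarith

lemma dotProduct_lap_mulVec_mono {W W' : Matrix (Fin n) (Fin n) ℝ} (hW : W.IsSymm)
    (hW' : W'.IsSymm) (h : ∀ i j, W i j ≤ W' i j) (x : Fin n → ℝ) :
    x ⬝ᵥ lap W *ᵥ x ≤ x ⬝ᵥ lap W' *ᵥ x := by
  have := two_mul_dotProduct_lap_mulVec hW x
  have := two_mul_dotProduct_lap_mulVec hW' x
  have : ∑ i, ∑ j, W i j * (x i - x j) ^ 2 ≤ ∑ i, ∑ j, W' i j * (x i - x j) ^ 2 := by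
    gcongr with i _ j _
    exact h i j
  linarith

lemma posSemidef_lap {W : Matrix (Fin n) (Fin n) ℝ} (hW : W.IsSymm) (hW0 : ∀ i j, 0 ≤ W i j) :
    (lap W).PosSemidef :=
  .of_dotProduct_mulVec_nonneg (isHermitian_iff_isSymm.mpr (lap_isSymm hW)) fun x => by
    simpa using dotProduct_lap_mulVec_nonneg hW hW0 x

lemma isSymm_const (a : ℝ) : (of fun _ _ => a : Matrix (Fin n) (Fin n) ℝ).IsSymm :=
  IsSymm.ext fun _ _ => rfl

-- `lap` ignores the diagonal of `W`, so the constant matrix is a model of the complete graph.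
lemma lap_const (a : ℝ) :
    lap (of fun _ _ => a : Matrix (Fin n) (Fin n) ℝ) = a • ((n : ℝ) • 1 - of fun _ _ => 1) := by
  ext i j
  rcases eq_or_ne i j with rfl | h
  · simp [lap, deg]
    ring
  · simp [lap, h]

lemma lap_const_mulVec_apply (a : ℝ) (x : Fin n → ℝ) (i : Fin n) :
    (lap (of fun _ _ => a) *ᵥ x) i = a * (n * x i - ∑ j, x j) := by
  simp [lap_mulVec_apply, ← Finset.mul_sum, Finset.sum_sub_distrib]

lemma dotProduct_lap_mulVec_le {W : Matrix (Fin n) (Fin n) ℝ} (hW : W.IsSymm) {a : ℝ}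
    (ha : 0 ≤ a) (hWa : ∀ i j, W i j ≤ a) (x : Fin n → ℝ) :
    x ⬝ᵥ lap W *ᵥ x ≤ a * n * (x ⬝ᵥ x) := by
  have hK : x ⬝ᵥ lap (of fun _ _ => a) *ᵥ x = a * n * (x ⬝ᵥ x) - a * (∑ i, x i) ^ 2 := by
    simp only [dotProduct, lap_const_mulVec_apply]
    calc ∑ i, x i * (a * (n * x i - ∑ j, x j))
        = ∑ i, (a * n * (x i * x i) - a * (∑ j, x j) * x i) :=
          Finset.sum_congr rfl fun i _ => by ring
      _ = _ := by rw [Finset.sum_sub_distrib, ← Finset.mul_sum, ← Finset.mul_sum]; ring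
  have := dotProduct_lap_mulVec_mono hW (isSymm_const a) hWa x
  nlinarith [sq_nonneg (∑ i, x i)]

end Laplacian

section Polarization

variable {n : ℕ}

lemma mean_add (x y : Fin n → ℝ) : mean (x + y) = mean x + mean y := by
  simp only [mean, Pi.add_apply, Finset.sum_add_distrib, add_div]

lemma ctr_add (x y : Fin n → ℝ) : ctr (x + y) = ctr x + ctr y := by
  ext i
  simp only [ctr, mean_add, Pi.add_apply]
  ring

lemma sum_ctr (x : Fin n → ℝ) : ∑ i, ctr x i = 0 := by
  rcases Nat.eq_zero_or_pos n with rfl | hn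
  · simp
  · simp only [ctr, mean, Finset.sum_sub_distrib, Finset.sum_const, Finset.card_univ,
      Fintype.card_fin, nsmul_eq_mul]
    field_simp
    ring

lemma ctr_of_sum_eq_zero {x : Fin n → ℝ} (hx : ∑ i, x i = 0) : ctr x = x := by
  ext i
  simp [ctr, mean, hx]

lemma pol_eq_dotProduct (x : Fin n → ℝ) : pol x = ctr x ⬝ᵥ ctr x := by
  simp only [pol, ctr, dotProduct, sq]

lemma ctr_add_lap_mulVec {W : Matrix (Fin n) (Fin n) ℝ} (hW : W.IsSymm) (z : Fin n → ℝ) :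
    ctr (z + lap W *ᵥ z) = ctr z + lap W *ᵥ ctr z := by
  rw [ctr_add, ctr_of_sum_eq_zero (sum_lap_mulVec hW z), lap_mulVec_ctr]

lemma one_add_lap_mulVec_inv_mulVec {W : Matrix (Fin n) (Fin n) ℝ} (hW : W.IsSymm)
    (hW0 : ∀ i j, 0 ≤ W i j) (s : Fin n → ℝ) : (1 + lap W) *ᵥ ((1 + lap W)⁻¹ *ᵥ s) = s := by
  have hpos : (1 + lap W).PosDef := PosDef.one.add_posSemidef (posSemidef_lap hW hW0)
  rw [mulVec_mulVec, mul_nonsing_inv _ hpos.det_pos.ne'.isUnit, one_mulVec]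

theorem pol_le_sq_mul_pol {W : Matrix (Fin n) (Fin n) ℝ} (hW : W.IsSymm) {a : ℝ} (ha : 0 ≤ a)
    (hW0 : ∀ i j, 0 ≤ W i j) (hWa : ∀ i j, W i j ≤ a) {s z : Fin n → ℝ}
    (hz : (1 + lap W) *ᵥ z = s) : pol s ≤ (1 + a * n) ^ 2 * pol z := by
  rw [add_mulVec, one_mulVec] at hz
  rw [pol_eq_dotProduct, pol_eq_dotProduct, ← hz, ctr_add_lap_mulVec hW]
  exact (posSemidef_lap hW hW0).add_mulVec_dotProduct_le (by positivity)
    (dotProduct_lap_mulVec_le hW ha hWa) _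

theorem pol_eq_sq_mul_pol_of_lap_const {a : ℝ} {s z : Fin n → ℝ}
    (hz : (1 + lap (of fun _ _ => a)) *ᵥ z = s) : pol s = (1 + a * n) ^ 2 * pol z := by
  have hK : lap (of fun _ _ => a) *ᵥ ctr z = (a * n) • ctr z := by
    ext i
    simp only [lap_const_mulVec_apply, sum_ctr, Pi.smul_apply, smul_eq_mul]
    ring
  rw [add_mulVec, one_mulVec] at hz
  rw [pol_eq_dotProduct, pol_eq_dotProduct, ← hz, ctr_add_lap_mulVec (isSymm_const a), hK]
  simp only [add_dotProduct, dotProduct_add, smul_dotProduct, dotProduct_smul, smul_eq_mul]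
  ring

end Polarization

theorem stmt_1_general {n : ℕ} (wbar : ℝ) (hwbar : 0 < wbar)
    (s : Fin n → ℝ)
    (LK : Matrix (Fin n) (Fin n) ℝ)
    (hLK : LK = wbar • ((n : ℝ) • (1 : Matrix (Fin n) (Fin n) ℝ) -
      Matrix.of fun _ _ => (1 : ℝ)))
    (zK : Fin n → ℝ) (hzK : zK = (1 + LK)⁻¹ *ᵥ s)
    (W : Matrix (Fin n) (Fin n) ℝ)
    (hsymm : W.IsSymm)
    (hW : ∀ i j, 0 ≤ W i j ∧ W i j ≤ wbar)
    (zG : Fin n → ℝ) (hzG : zG = (1 + lap W)⁻¹ *ᵥ s) :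
    pol zK ≤ pol zG ∧ pol zK = pol s / (1 + wbar * n) ^ 2 := by
  rw [← lap_const] at hLK
  subst hLK hzK hzG
  have hpolK := pol_eq_sq_mul_pol_of_lap_const
    (one_add_lap_mulVec_inv_mulVec (isSymm_const wbar) (fun _ _ => hwbar.le) s)
  have hpolG := pol_le_sq_mul_pol hsymm hwbar.le (fun i j => (hW i j).1) (fun i j => (hW i j).2)
    (one_add_lap_mulVec_inv_mulVec hsymm (fun i j => (hW i j).1) s)
  have hc : 0 < (1 + wbar * n) ^ 2 := by positivity
  refine ⟨le_of_mul_le_mul_left (hpolK ▸ hpolG) hc, ?_⟩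
  rw [hpolK]
  exact (mul_div_cancel_left₀ _ hc.ne').symm

/-- Corollary 1: the complete graph with all edge weights equal to `wbar`
globally minimizes expressed polarization, and its polarization equals
`P(s) / (1 + wbar * n)^2`. -/
theorem stmt_1 {n : ℕ} (hn : 2 ≤ n) (wbar : ℝ) (hwbar : 0 < wbar)
    (s : Fin n → ℝ)
    (LK : Matrix (Fin n) (Fin n) ℝ)
    (hLK : LK = wbar • ((n : ℝ) • (1 : Matrix (Fin n) (Fin n) ℝ) -
      Matrix.of fun _ _ => (1 : ℝ)))
    (zK : Fin n → ℝ) (hzK : zK = (1 + LK)⁻¹ *ᵥ s)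
    (W : Matrix (Fin n) (Fin n) ℝ)
    (hsymm : W.IsSymm) (hdiag : ∀ i, W i i = 0)
    (hW : ∀ i j, 0 ≤ W i j ∧ W i j ≤ wbar)
    (zG : Fin n → ℝ) (hzG : zG = (1 + lap W)⁻¹ *ᵥ s) :
    pol zK ≤ pol zG ∧ pol zK = pol s / (1 + wbar * n) ^ 2 :=
  stmt_1_general wbar hwbar s LK hLK zK hzK W hsymm hW zG hzG
end

section
/- Let (i,j) be a pair of distinct vertices with w_ij < w̄ and δ ∈ (0, w̄ − w_ij], and let L⁺ = L + δ·v_ij·v_ijᵀ. Let v be a unit-norm eigenvector of L with L·v = λ₂(L)·v and vᵀ1 = 0, and set α = |v_i − v_j|. Then λ₂(L⁺) − λ₂(L) ≤ δ·α², and if β := λ₃(L) − λ₂(L) > 0 then additionally λ₂(L⁺) − λ₂(L) ≥ max{1 − 2δ/β, 0}·δ·α². -/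
open Matrix Finset

/-!
Write `L⁺ = L + δ uuᵀ` with `u = e_i - e_j`; both `L` and `L⁺` kill the constant vector `1`.

Upper bound: `1` and the Fiedler vector `v` are orthogonal and `L⁺`-orthogonal, with Rayleigh
quotients `0` and `λ₂ + δ (u ⬝ v)²`. Their span contains a nonzero vector orthogonal to the bottom
eigenvector of `L⁺`, whose Rayleigh quotient is therefore at least `λ₂(L⁺)`.

Lower bound: the span of the two bottom eigenvectors of `L⁺` contains a nonzero `z ⊥ 1` with
`zᵀL⁺z ≤ λ₂(L⁺) |z|²`. Write `z = c v + w` with `w ⊥ v`; then also `w ⊥ 1`, and since `1`, `v`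
span the eigenvectors of `L` below `λ₃`, `wᵀLw ≥ λ₃ |w|²`. Expanding `zᵀL⁺z` leaves a quadratic
inequality in `c`, `|w|`, `u ⬝ v`, `u ⬝ w`, closed using `(u ⬝ x)² ≤ 2 |x|²`.
-/

theorem exists_sq_add_sq_pos_and_mul_add_mul_eq_zero (x y : ℝ) :
    ∃ a b : ℝ, 0 < a ^ 2 + b ^ 2 ∧ a * x + b * y = 0 := by
  by_cases hx : x = 0
  · exact ⟨1, 0, by norm_num, by simp [hx]⟩
  · exact ⟨y, -x, by nlinarith [sq_pos_of_ne_zero hx, sq_nonneg y], by ring⟩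

theorem eq_zero_of_orthogonal_of_orthogonal {p₀ p₁ q₀ q₁ r₀ r₁ : ℝ}
    (hp : p₀ * p₀ + p₁ * p₁ ≠ 0) (hq : q₀ * q₀ + q₁ * q₁ ≠ 0) (hpq : p₀ * q₀ + p₁ * q₁ = 0)
    (hpr : p₀ * r₀ + p₁ * r₁ = 0) (hqr : q₀ * r₀ + q₁ * r₁ = 0) : r₀ = 0 ∧ r₁ = 0 := by
  have hdet : (p₀ * q₁ - p₁ * q₀) ^ 2 = (p₀ * p₀ + p₁ * p₁) * (q₀ * q₀ + q₁ * q₁) := by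
    linear_combination (-(p₀ * q₀ + p₁ * q₁)) * hpq
  have hdet0 : p₀ * q₁ - p₁ * q₀ ≠ 0 := by
    intro h
    rw [h, zero_pow two_ne_zero] at hdet
    exact mul_ne_zero hp hq hdet.symm
  constructor
  · refine (mul_eq_zero.mp ?_).resolve_left hdet0
    linear_combination q₁ * hpr - p₁ * hqr
  · refine (mul_eq_zero.mp ?_).resolve_left hdet0
    linear_combination p₀ * hqr - q₀ * hpr

theorem max_one_sub_two_mul_div_mul_le {β δ a c t p : ℝ} (hβ : 0 < β) (hδ : 0 ≤ δ)
    (ha : a ^ 2 ≤ 2) (ht : t ^ 2 ≤ 2 * p) :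
    max (1 - 2 * δ / β) 0 * (δ * a ^ 2) * (c ^ 2 + p) ≤ β * p + δ * (c * a + t) ^ 2 := by
  have hp : 0 ≤ p := by nlinarith [sq_nonneg t]
  rcases le_or_gt (1 - 2 * δ / β) 0 with hneg | hpos
  · rw [max_eq_right hneg, zero_mul, zero_mul]
    positivity
  · rw [max_eq_left hpos.le, one_sub_div hβ.ne', div_mul_eq_mul_div, div_mul_eq_mul_div,
      div_le_iff₀ hβ]
    have h2δ : 2 * δ < β := by
      have := (div_lt_one hβ).mp (by linarith : 2 * δ / β < 1)
      linarith
    -- `β (β p + δ (c a + t)²) - (β - 2δ) δ a² (c² + p)` is a nonnegative combination of these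
    linarith [mul_nonneg (mul_nonneg (sub_nonneg.mpr h2δ.le) hδ)
        (mul_nonneg (sub_nonneg.mpr ha) hp),
      mul_nonneg (by nlinarith [sq_nonneg (β - δ)] : 0 ≤ β ^ 2 - 2 * β * δ + 4 * δ ^ 2)
        (sub_nonneg.mpr ht),
      sq_nonneg (β * t + 2 * δ * (c * a)), sq_nonneg (δ * t)]

section
variable {ι R : Type*} [Fintype ι] [CommSemiring R]

theorem add_smul_vecMulVec_mulVec (A : Matrix ι ι R) (u : ι → R) (δ : R) (x : ι → R) :
    (A + δ • vecMulVec u u) *ᵥ x = A *ᵥ x + (δ * (u ⬝ᵥ x)) • u := by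
  rw [add_mulVec, smul_mulVec, vecMulVec_mulVec, op_smul_eq_smul, smul_smul]

theorem dotProduct_add_smul_vecMulVec_mulVec (A : Matrix ι ι R) (u : ι → R) (δ : R)
    (x y : ι → R) :
    y ⬝ᵥ (A + δ • vecMulVec u u) *ᵥ x = y ⬝ᵥ A *ᵥ x + δ * (u ⬝ᵥ y) * (u ⬝ᵥ x) := by
  rw [add_smul_vecMulVec_mulVec, dotProduct_add, dotProduct_smul, smul_eq_mul,
    dotProduct_comm y u]
  ring

end

namespace Matrix.IsHermitian

variable {ι : Type*} [Fintype ι] {A : Matrix ι ι ℝ}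

theorem dotProduct_mulVec_comm (hA : A.IsHermitian) (x y : ι → ℝ) :
    x ⬝ᵥ A *ᵥ y = y ⬝ᵥ A *ᵥ x := by
  rw [dotProduct_mulVec, ← mulVec_transpose, ← conjTranspose_eq_transpose_of_trivial, hA.eq,
    dotProduct_comm]

theorem le_dotProduct_add_smul_vecMulVec_mulVec (hA : A.IsHermitian) {u v w : ι → ℝ}
    {lam β δ : ℝ} (c : ℝ) (hβ : 0 < β) (hδ : 0 ≤ δ) (hu : ∀ x, (u ⬝ᵥ x) ^ 2 ≤ 2 * (x ⬝ᵥ x))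
    (hv : v ⬝ᵥ v = 1) (hAv : A *ᵥ v = lam • v) (hvw : v ⬝ᵥ w = 0)
    (hw : (lam + β) * (w ⬝ᵥ w) ≤ w ⬝ᵥ A *ᵥ w) :
    (lam + max (1 - 2 * δ / β) 0 * (δ * (u ⬝ᵥ v) ^ 2)) * ((c • v + w) ⬝ᵥ (c • v + w)) ≤
      (c • v + w) ⬝ᵥ (A + δ • vecMulVec u u) *ᵥ (c • v + w) := by
  have hwv : w ⬝ᵥ v = 0 := by rw [dotProduct_comm, hvw]
  have hvAw : v ⬝ᵥ A *ᵥ w = 0 := by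
    rw [hA.dotProduct_mulVec_comm, hAv, dotProduct_smul, hwv, smul_zero]
  have hzz : (c • v + w) ⬝ᵥ (c • v + w) = c ^ 2 + w ⬝ᵥ w := by
    simp only [dotProduct_add, add_dotProduct, dotProduct_smul, smul_dotProduct, smul_eq_mul, hv,
      hvw, hwv]
    ring
  have hzAz : (c • v + w) ⬝ᵥ A *ᵥ (c • v + w) = c ^ 2 * lam + w ⬝ᵥ A *ᵥ w := by
    simp only [mulVec_add, mulVec_smul, hAv, dotProduct_add, add_dotProduct, dotProduct_smul,
      smul_dotProduct, smul_eq_mul, hv, hwv, hvAw]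
    ring
  have huz : u ⬝ᵥ (c • v + w) = c * (u ⬝ᵥ v) + u ⬝ᵥ w := by
    rw [dotProduct_add, dotProduct_smul, smul_eq_mul]
  have ha : (u ⬝ᵥ v) ^ 2 ≤ 2 := by simpa [hv] using hu v
  have key := max_one_sub_two_mul_div_mul_le (c := c) hβ hδ ha (hu w)
  rw [dotProduct_add_smul_vecMulVec_mulVec, hzz, hzAz, huz]
  linarith

variable [DecidableEq ι] (hA : A.IsHermitian)

noncomputable def eigenCoord (x : ι → ℝ) (k : ι) : ℝ := ⇑(hA.eigenvectorBasis k) ⬝ᵥ x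

theorem sum_eigenCoord_mul_eigenCoord (x y : ι → ℝ) :
    ∑ k, hA.eigenCoord x k * hA.eigenCoord y k = x ⬝ᵥ y := by
  have := hA.eigenvectorBasis.sum_inner_mul_inner (WithLp.toLp 2 x) (WithLp.toLp 2 y)
  simpa [eigenCoord, EuclideanSpace.inner_eq_star_dotProduct, dotProduct_comm] using this

theorem eigenCoord_eigenvectorBasis (k l : ι) :
    hA.eigenCoord (hA.eigenvectorBasis l) k = if k = l then 1 else 0 := by
  simpa [eigenCoord, EuclideanSpace.inner_eq_star_dotProduct, dotProduct_comm] using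
    orthonormal_iff_ite.mp hA.eigenvectorBasis.orthonormal k l

theorem eigenCoord_smul_add_smul (a b : ℝ) (x y : ι → ℝ) (k : ι) :
    hA.eigenCoord (a • x + b • y) k = a * hA.eigenCoord x k + b * hA.eigenCoord y k := by
  simp [eigenCoord, dotProduct_add, dotProduct_smul]

theorem eigenCoord_mulVec (x : ι → ℝ) (k : ι) :
    hA.eigenCoord (A *ᵥ x) k = hA.eigenvalues k * hA.eigenCoord x k := by
  rw [eigenCoord, hA.dotProduct_mulVec_comm, hA.mulVec_eigenvectorBasis, dotProduct_smul,
    smul_eq_mul, dotProduct_comm, eigenCoord]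

theorem dotProduct_mulVec_eq_sum (x : ι → ℝ) :
    x ⬝ᵥ A *ᵥ x = ∑ k, hA.eigenvalues k * hA.eigenCoord x k ^ 2 := by
  rw [← hA.sum_eigenCoord_mul_eigenCoord]
  refine sum_congr rfl fun k _ => ?_
  rw [eigenCoord_mulVec]
  ring

theorem eigenCoord_eq_zero_of_mulVec_eq_smul {x : ι → ℝ} {θ : ℝ} (hx : A *ᵥ x = θ • x) {k : ι}
    (hk : hA.eigenvalues k ≠ θ) : hA.eigenCoord x k = 0 := by
  have h := hA.eigenCoord_mulVec x k
  rw [hx, eigenCoord, dotProduct_smul, smul_eq_mul, ← eigenCoord] at h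
  have : (hA.eigenvalues k - θ) * hA.eigenCoord x k = 0 := by linarith
  exact (mul_eq_zero.mp this).resolve_left (sub_ne_zero.mpr hk)

theorem mul_dotProduct_le_of_eigenCoord_eq_zero {c : ℝ} {x : ι → ℝ}
    (hx : ∀ k, hA.eigenvalues k < c → hA.eigenCoord x k = 0) :
    c * (x ⬝ᵥ x) ≤ x ⬝ᵥ A *ᵥ x := by
  rw [hA.dotProduct_mulVec_eq_sum, ← hA.sum_eigenCoord_mul_eigenCoord, mul_sum]
  refine sum_le_sum fun k _ => ?_
  rcases lt_or_ge (hA.eigenvalues k) c with hk | hk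
  · simp [hx k hk]
  · rw [← sq]
    exact mul_le_mul_of_nonneg_right hk (sq_nonneg _)

theorem dotProduct_mulVec_le_mul_of_eigenCoord_eq_zero {c : ℝ} {x : ι → ℝ}
    (hx : ∀ k, c < hA.eigenvalues k → hA.eigenCoord x k = 0) :
    x ⬝ᵥ A *ᵥ x ≤ c * (x ⬝ᵥ x) := by
  rw [hA.dotProduct_mulVec_eq_sum, ← hA.sum_eigenCoord_mul_eigenCoord, mul_sum]
  refine sum_le_sum fun k _ => ?_
  rcases lt_or_ge c (hA.eigenvalues k) with hk | hk
  · simp [hx k hk]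
  · rw [← sq]
    exact mul_le_mul_of_nonneg_right hk (sq_nonneg _)

theorem dotProduct_eq_of_eigenCoord_eq_zero {x : ι → ℝ} {k₀ k₁ : ι} (hk : k₀ ≠ k₁)
    (hx : ∀ k, k ≠ k₀ → k ≠ k₁ → hA.eigenCoord x k = 0) (y : ι → ℝ) :
    x ⬝ᵥ y =
      hA.eigenCoord x k₀ * hA.eigenCoord y k₀ + hA.eigenCoord x k₁ * hA.eigenCoord y k₁ := by
  rw [← hA.sum_eigenCoord_mul_eigenCoord,
    ← sum_pair (f := fun k => hA.eigenCoord x k * hA.eigenCoord y k) hk]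
  refine (sum_subset (subset_univ _) fun k _ hk' => ?_).symm
  simp only [mem_insert, mem_singleton, not_or] at hk'
  simp [hx k hk'.1 hk'.2]

end Matrix.IsHermitian

namespace Matrix.IsHermitian

variable {n : ℕ} {A : Matrix (Fin n) (Fin n) ℝ} {μ : Fin n → ℝ} {σ : Equiv.Perm (Fin n)}

theorem second_le_of_orthogonal (hA : A.IsHermitian) (hμ : Monotone μ)
    (hσ : hA.eigenvalues = μ ∘ σ) (h1 : 1 < n) {x y : Fin n → ℝ} (hx : x ≠ 0) (hy : y ≠ 0)
    (hxy : x ⬝ᵥ y = 0) (hAxy : x ⬝ᵥ A *ᵥ y = 0) {c : ℝ} (hxc : x ⬝ᵥ A *ᵥ x ≤ c * (x ⬝ᵥ x))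
    (hyc : y ⬝ᵥ A *ᵥ y ≤ c * (y ⬝ᵥ y)) : μ ⟨1, h1⟩ ≤ c := by
  set k₀ := σ.symm ⟨0, by omega⟩
  obtain ⟨a, b, hab, hz⟩ :=
    exists_sq_add_sq_pos_and_mul_add_mul_eq_zero (hA.eigenCoord x k₀) (hA.eigenCoord y k₀)
  set z := a • x + b • y
  have hzz : z ⬝ᵥ z = a ^ 2 * (x ⬝ᵥ x) + b ^ 2 * (y ⬝ᵥ y) := by
    simp only [z, dotProduct_add, add_dotProduct, dotProduct_smul, smul_dotProduct, smul_eq_mul,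
      dotProduct_comm y x, hxy]
    ring
  have hzAz : z ⬝ᵥ A *ᵥ z = a ^ 2 * (x ⬝ᵥ A *ᵥ x) + b ^ 2 * (y ⬝ᵥ A *ᵥ y) := by
    simp only [z, mulVec_add, mulVec_smul, dotProduct_add, add_dotProduct, dotProduct_smul,
      smul_dotProduct, smul_eq_mul, hA.dotProduct_mulVec_comm y x, hAxy]
    ring
  have hlow : μ ⟨1, h1⟩ * (z ⬝ᵥ z) ≤ z ⬝ᵥ A *ᵥ z := by
    refine hA.mul_dotProduct_le_of_eigenCoord_eq_zero fun k hk => ?_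
    have := hμ.reflect_lt (hσ ▸ hk)
    have hk₀ : k = k₀ := by
      simp only [k₀, Equiv.eq_symm_apply, Fin.ext_iff, Fin.lt_def] at this ⊢
      omega
    rw [hk₀, eigenCoord_smul_add_smul, hz]
  have hup : z ⬝ᵥ A *ᵥ z ≤ c * (z ⬝ᵥ z) := by
    rw [hzAz, hzz]
    nlinarith [mul_le_mul_of_nonneg_left hxc (sq_nonneg a),
      mul_le_mul_of_nonneg_left hyc (sq_nonneg b)]
  have hz0 : 0 < z ⬝ᵥ z := by
    have hx' : 0 < x ⬝ᵥ x := by simpa using dotProduct_self_star_pos_iff.mpr hx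
    have hy' : 0 < y ⬝ᵥ y := by simpa using dotProduct_self_star_pos_iff.mpr hy
    rw [hzz]
    nlinarith [mul_pos hab (lt_min hx' hy'), min_le_left (x ⬝ᵥ x) (y ⬝ᵥ y),
      min_le_right (x ⬝ᵥ x) (y ⬝ᵥ y), sq_nonneg a, sq_nonneg b]
  exact le_of_mul_le_mul_right (hlow.trans hup) hz0

theorem exists_orthogonal_dotProduct_mulVec_le_second (hA : A.IsHermitian) (hμ : Monotone μ)
    (hσ : hA.eigenvalues = μ ∘ σ) (h1 : 1 < n) (o : Fin n → ℝ) :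
    ∃ z ≠ 0, o ⬝ᵥ z = 0 ∧ z ⬝ᵥ A *ᵥ z ≤ μ ⟨1, h1⟩ * (z ⬝ᵥ z) := by
  set k₀ := σ.symm ⟨0, by omega⟩
  set k₁ := σ.symm ⟨1, h1⟩
  have hk : k₀ ≠ k₁ := by simp [k₀, k₁]
  obtain ⟨a, b, hab, hz⟩ :=
    exists_sq_add_sq_pos_and_mul_add_mul_eq_zero (hA.eigenCoord o k₀) (hA.eigenCoord o k₁)
  set z : Fin n → ℝ := a • ⇑(hA.eigenvectorBasis k₀) + b • ⇑(hA.eigenvectorBasis k₁)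
  have hzk (k : Fin n) :
      hA.eigenCoord z k = a * (if k = k₀ then 1 else 0) + b * (if k = k₁ then 1 else 0) := by
    rw [eigenCoord_smul_add_smul, eigenCoord_eigenvectorBasis, eigenCoord_eigenvectorBasis]
  refine ⟨z, fun h0 => ?_, ?_, ?_⟩
  · have h₀ := hzk k₀
    have h₁ := hzk k₁
    simp only [h0, hk, hk.symm, eigenCoord, dotProduct_zero, if_true, if_false] at h₀ h₁
    nlinarith
  · rw [dotProduct_comm]
    simpa [z, add_dotProduct, smul_dotProduct, eigenCoord] using hz
  · refine hA.dotProduct_mulVec_le_mul_of_eigenCoord_eq_zero fun k hk' => ?_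
    have := hμ.reflect_lt (hσ ▸ hk')
    have h₀ : k ≠ k₀ := by rintro rfl; simp [k₀, Fin.lt_def] at this
    have h₁ : k ≠ k₁ := by rintro rfl; simp [k₁] at this
    simp [hzk, h₀, h₁]

theorem third_mul_dotProduct_le_of_orthogonal (hA : A.IsHermitian) (hμ : Monotone μ)
    (hσ : hA.eigenvalues = μ ∘ σ) (h2 : 2 < n) {x y w : Fin n → ℝ} {θ η : ℝ}
    (hx : A *ᵥ x = θ • x) (hy : A *ᵥ y = η • y) (hθ : θ < μ ⟨2, h2⟩) (hη : η < μ ⟨2, h2⟩)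
    (hx0 : x ≠ 0) (hy0 : y ≠ 0) (hxy : x ⬝ᵥ y = 0) (hxw : x ⬝ᵥ w = 0) (hyw : y ⬝ᵥ w = 0) :
    μ ⟨2, h2⟩ * (w ⬝ᵥ w) ≤ w ⬝ᵥ A *ᵥ w := by
  set k₀ := σ.symm ⟨0, by omega⟩
  set k₁ := σ.symm ⟨1, by omega⟩
  have hk : k₀ ≠ k₁ := by simp [k₀, k₁]
  have hlow (k : Fin n) (hk' : hA.eigenvalues k < μ ⟨2, h2⟩) : k = k₀ ∨ k = k₁ := by
    have := hμ.reflect_lt (hσ ▸ hk')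
    simp only [k₀, k₁, Equiv.eq_symm_apply, Fin.ext_iff, Fin.lt_def] at this ⊢
    omega
  have hsupp {u : Fin n → ℝ} {ρ : ℝ} (hu : A *ᵥ u = ρ • u) (hρ : ρ < μ ⟨2, h2⟩) (k : Fin n)
      (h₀ : k ≠ k₀) (h₁ : k ≠ k₁) : hA.eigenCoord u k = 0 :=
    hA.eigenCoord_eq_zero_of_mulVec_eq_smul hu fun h =>
      (hlow k (h ▸ hρ)).elim h₀ h₁
  have hxsum := hA.dotProduct_eq_of_eigenCoord_eq_zero hk (hsupp hx hθ)
  have hysum := hA.dotProduct_eq_of_eigenCoord_eq_zero hk (hsupp hy hη)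
  have hxx : x ⬝ᵥ x ≠ 0 := dotProduct_self_eq_zero.not.mpr hx0
  have hyy : y ⬝ᵥ y ≠ 0 := dotProduct_self_eq_zero.not.mpr hy0
  rw [hxsum] at hxy hxw hxx
  rw [hysum] at hyw hyy
  obtain ⟨hw₀, hw₁⟩ := eq_zero_of_orthogonal_of_orthogonal hxx hyy hxy hxw hyw
  refine hA.mul_dotProduct_le_of_eigenCoord_eq_zero fun k hk' => ?_
  rcases hlow k hk' with rfl | rfl
  exacts [hw₀, hw₁]

theorem second_le_of_rankOne_update {u v : Fin n → ℝ} {δ lam : ℝ} {ν : Fin n → ℝ}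
    {τ : Equiv.Perm (Fin n)} (hB : (A + δ • vecMulVec u u).IsHermitian) (hν : Monotone ν)
    (hτ : hB.eigenvalues = ν ∘ τ) (h1 : 1 < n) (hδ : 0 ≤ δ) (hA1 : A *ᵥ 1 = 0)
    (hu1 : u ⬝ᵥ 1 = 0) (hAv : A *ᵥ v = lam • v) (hlam : 0 ≤ lam) (hv : v ⬝ᵥ v = 1)
    (h1v : 1 ⬝ᵥ v = 0) : ν ⟨1, h1⟩ ≤ lam + δ * (u ⬝ᵥ v) ^ 2 := by
  have h10 : (1 : Fin n → ℝ) ≠ 0 := fun h => by simpa using congrFun h ⟨0, by omega⟩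
  have hv0 : v ≠ 0 := by rintro rfl; simp at hv
  refine hB.second_le_of_orthogonal hν hτ h1 h10 hv0 h1v ?_ ?_ ?_
  · rw [dotProduct_add_smul_vecMulVec_mulVec, hAv, dotProduct_smul, h1v, hu1]
    simp
  · rw [dotProduct_add_smul_vecMulVec_mulVec, hA1, hu1]
    simp only [dotProduct_zero, zero_add, mul_zero, one_dotProduct_one]
    positivity
  · rw [dotProduct_add_smul_vecMulVec_mulVec, hAv, dotProduct_smul, hv, smul_eq_mul]
    exact le_of_eq (by ring)

theorem le_second_of_rankOne_update (hA : A.IsHermitian) (hμ : Monotone μ)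
    (hσ : hA.eigenvalues = μ ∘ σ) {u v : Fin n → ℝ} {δ lam : ℝ} {ν : Fin n → ℝ}
    {τ : Equiv.Perm (Fin n)} (hB : (A + δ • vecMulVec u u).IsHermitian) (hν : Monotone ν)
    (hτ : hB.eigenvalues = ν ∘ τ) (h2 : 2 < n) (hδ : 0 ≤ δ) (hA1 : A *ᵥ 1 = 0)
    (hu : ∀ x, (u ⬝ᵥ x) ^ 2 ≤ 2 * (x ⬝ᵥ x)) (hAv : A *ᵥ v = lam • v) (hlam : 0 ≤ lam)
    (hgap : lam < μ ⟨2, h2⟩) (hv : v ⬝ᵥ v = 1) (h1v : 1 ⬝ᵥ v = 0) :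
    lam + max (1 - 2 * δ / (μ ⟨2, h2⟩ - lam)) 0 * (δ * (u ⬝ᵥ v) ^ 2) ≤ ν ⟨1, by omega⟩ := by
  have h10 : (1 : Fin n → ℝ) ≠ 0 := fun h => by simpa using congrFun h ⟨0, by omega⟩
  have hv0 : v ≠ 0 := by rintro rfl; simp at hv
  obtain ⟨z, hz0, h1z, hzB⟩ :=
    hB.exists_orthogonal_dotProduct_mulVec_le_second hν hτ (by omega) 1
  set w := z - (v ⬝ᵥ z) • v
  have hz : z = (v ⬝ᵥ z) • v + w := (add_sub_cancel _ _).symm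
  have hvw : v ⬝ᵥ w = 0 := by simp [w, dotProduct_sub, dotProduct_smul, hv]
  have h1w : 1 ⬝ᵥ w = 0 := by simp [w, dotProduct_sub, dotProduct_smul, h1z, h1v]
  have hw : (lam + (μ ⟨2, h2⟩ - lam)) * (w ⬝ᵥ w) ≤ w ⬝ᵥ A *ᵥ w := by
    rw [add_sub_cancel]
    exact hA.third_mul_dotProduct_le_of_orthogonal hμ hσ h2 (θ := 0) (by simp [hA1]) hAv
      (by linarith) hgap h10 hv0 h1v h1w hvw
  have hlow := hA.le_dotProduct_add_smul_vecMulVec_mulVec (v ⬝ᵥ z) (sub_pos.mpr hgap) hδ hu hv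
    hAv hvw hw
  rw [← hz] at hlow
  have hzz : 0 < z ⬝ᵥ z := by simpa using dotProduct_self_star_pos_iff.mpr hz0
  exact le_of_mul_le_mul_right (hlow.trans hzB) hzz

end Matrix.IsHermitian

theorem lap_mulVec_one {n : ℕ} (W : Matrix (Fin n) (Fin n) ℝ) : lap W *ᵥ 1 = 0 := by
  ext a
  rw [lap, sub_mulVec, Pi.sub_apply, mulVec_diagonal]
  simp [deg, mulVec, dotProduct_one]

theorem dotProduct_lap_mulVec_self {n : ℕ} {W : Matrix (Fin n) (Fin n) ℝ} (hW : W.IsSymm)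
    (x : Fin n → ℝ) : x ⬝ᵥ lap W *ᵥ x = (∑ a, ∑ b, W a b * (x a - x b) ^ 2) / 2 := by
  have hswap : ∑ a, ∑ b, W a b * x b ^ 2 = ∑ a, ∑ b, W a b * x a ^ 2 := by
    rw [sum_comm]
    simp_rw [hW.apply]
  have hexpand :
      x ⬝ᵥ lap W *ᵥ x = ∑ a, ∑ b, W a b * x a ^ 2 - ∑ a, ∑ b, W a b * (x a * x b) := by
    rw [lap, sub_mulVec, dotProduct_sub]
    congr 1
    · refine sum_congr rfl fun a _ => ?_
      rw [mulVec_diagonal, deg, sum_mul, mul_sum]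
      exact sum_congr rfl fun b _ => by ring
    · refine sum_congr rfl fun a _ => ?_
      simp only [mulVec, dotProduct, mul_sum]
      exact sum_congr rfl fun b _ => by ring
  have hsq : ∑ a, ∑ b, W a b * (x a - x b) ^ 2 =
      ∑ a, ∑ b, W a b * x a ^ 2 + ∑ a, ∑ b, W a b * x b ^ 2 -
        2 * ∑ a, ∑ b, W a b * (x a * x b) := by
    simp only [mul_sum, ← sum_add_distrib, ← sum_sub_distrib]
    refine sum_congr rfl fun a _ => sum_congr rfl fun b _ => by ring
  rw [hexpand, hsq, hswap]
  ring

theorem dotProduct_lap_mulVec_self_nonneg {n : ℕ} {W : Matrix (Fin n) (Fin n) ℝ} (hW : W.IsSymm)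
    (hW0 : ∀ a b, 0 ≤ W a b) (x : Fin n → ℝ) : 0 ≤ x ⬝ᵥ lap W *ᵥ x := by
  rw [dotProduct_lap_mulVec_self hW]
  exact div_nonneg (sum_nonneg fun a _ => sum_nonneg fun b _ =>
    mul_nonneg (hW0 a b) (sq_nonneg _)) zero_le_two

theorem vij_dotProduct {n : ℕ} (i j : Fin n) (x : Fin n → ℝ) : vij i j ⬝ᵥ x = x i - x j := by
  simp [vij, dotProduct, sub_mul, sum_sub_distrib, ite_mul]

theorem sq_vij_dotProduct_le {n : ℕ} {i j : Fin n} (hij : i ≠ j) (x : Fin n → ℝ) :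
    (vij i j ⬝ᵥ x) ^ 2 ≤ 2 * (x ⬝ᵥ x) := by
  have := add_le_sum (fun k _ => mul_self_nonneg (x k)) (mem_univ i) (mem_univ j) hij
  rw [vij_dotProduct, dotProduct]
  nlinarith [sq_nonneg (x i + x j)]

/-- Theorem 2: bounds on the change in the spectral gap when weight
`δ` is added to the edge `(i,j)`, in terms of `α = |v_i - v_j|` where `v` is a unit-norm
Fiedler vector, and `β = λ₃(L) - λ₂(L)`. Here `μ` (resp. `ν`) lists the eigenvalues of
`L` (resp. `L⁺ = L + δ v_ij v_ijᵀ`) with multiplicity in increasing order; we assume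
`n ≥ 3` so that `λ₃(L)` is defined. -/
theorem stmt_11 {n : ℕ} (hn : 3 ≤ n) (wbar : ℝ)
    (W : Matrix (Fin n) (Fin n) ℝ)
    (hsymm : W.IsSymm)
    (hW : ∀ i j, 0 ≤ W i j ∧ W i j ≤ wbar)
    (i j : Fin n) (hij : i ≠ j)
    (δ : ℝ) (hδ0 : 0 < δ)
    (hL : (lap W).IsHermitian)
    (μ : Fin n → ℝ) (hmono : Monotone μ)
    (hperm : ∃ σ : Equiv.Perm (Fin n), hL.eigenvalues = μ ∘ σ)
    (hLp : (lap W + δ • vecMulVec (vij i j) (vij i j)).IsHermitian)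
    (ν : Fin n → ℝ) (hνmono : Monotone ν)
    (hνperm : ∃ σ : Equiv.Perm (Fin n), hLp.eigenvalues = ν ∘ σ)
    (v : Fin n → ℝ) (hvnorm : (∑ k, v k ^ 2) = 1)
    (hev : lap W *ᵥ v = μ ⟨1, by omega⟩ • v) (hones : (∑ k, v k) = 0)
    (α : ℝ) (hα : α = |v i - v j|) :
    ν ⟨1, by omega⟩ - μ ⟨1, by omega⟩ ≤ δ * α ^ 2 ∧
      (0 < μ ⟨2, by omega⟩ - μ ⟨1, by omega⟩ →
        max (1 - 2 * δ / (μ ⟨2, by omega⟩ - μ ⟨1, by omega⟩)) 0 * (δ * α ^ 2) ≤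
          ν ⟨1, by omega⟩ - μ ⟨1, by omega⟩) := by
  obtain ⟨σ, hσ⟩ := hperm
  obtain ⟨τ, hτ⟩ := hνperm
  have hv : v ⬝ᵥ v = 1 := by simpa [dotProduct, sq] using hvnorm
  have h1v : 1 ⬝ᵥ v = 0 := by rw [one_dotProduct, hones]
  have hu1 : vij i j ⬝ᵥ 1 = 0 := by simp [vij_dotProduct]
  have hμ₁ : 0 ≤ μ ⟨1, by omega⟩ := by
    simpa [hev, hv] using dotProduct_lap_mulVec_self_nonneg hsymm (fun a b => (hW a b).1) v
  have hα2 : α ^ 2 = (vij i j ⬝ᵥ v) ^ 2 := by rw [hα, sq_abs, vij_dotProduct]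
  refine ⟨?_, fun hβ => ?_⟩
  · have := hLp.second_le_of_rankOne_update hνmono hτ (by omega) hδ0.le (lap_mulVec_one W) hu1
      hev hμ₁ hv h1v
    rw [hα2]
    linarith
  · have := hL.le_second_of_rankOne_update hmono hσ hLp hνmono hτ (by omega) hδ0.le
      (lap_mulVec_one W) (sq_vij_dotProduct_le hij) hev hμ₁ (sub_pos.mp hβ) hv h1v
    rw [hα2]
    linarith
end
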